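/- With γ(x,y,z) = (y¹ − z¹)(x² − y²)x³ as above and c(x,y,z) = exp(2πi γ(x,y,z)), for any x,y,z,w ∈ ℝ³ with pairwise integer differences one has c(y,z,w)·c(x,z,w)^{-1}·c(x,y,w)·c(x,y,z)^{-1} = 1; i.e., c is a U(1)-valued cocycle defining an associative bundle gerbe multiplication. -/
import Mathlib


/-- `γ(x,y,z) = (y¹ − z¹)(x² − y²)x³` on triples of vectors in `ℝ³`. -/
def gammaCocycle (x y z : Fin 3 → ℝ) : ℝ :=
  (y 0 - z 0) * (x 1 - y 1) * x 2

/-- `c(x,y,z) = exp(2πi γ(x,y,z)) ∈ U(1) ⊂ ℂ`. -/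
noncomputable def cCocycle (x y z : Fin 3 → ℝ) : ℂ :=
  Complex.exp (2 * Real.pi * Complex.I * gammaCocycle x y z)

/-- For `x,y,z,w ∈ ℝ³` with pairwise integer differences,
`c(y,z,w)·c(x,z,w)⁻¹·c(x,y,w)·c(x,y,z)⁻¹ = 1`; i.e. `c` is a `U(1)`-valued
cocycle (`δ(c) = 1`), defining an associative bundle gerbe multiplication. -/
theorem cCocycle_is_cocycle (x y z w : Fin 3 → ℝ)
    (hxy : ∀ i, ∃ n : ℤ, x i - y i = n)
    (hyz : ∀ i, ∃ n : ℤ, y i - z i = n)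
    (hzw : ∀ i, ∃ n : ℤ, z i - w i = n) :
    cCocycle y z w * (cCocycle x z w)⁻¹ * cCocycle x y w
      * (cCocycle x y z)⁻¹ = 1 := by
  obtain ⟨a, ha⟩ := hzw 0
  obtain ⟨b, hb⟩ := hyz 1
  obtain ⟨c, hc⟩ := hxy 2
  have key : gammaCocycle y z w - gammaCocycle x z w + gammaCocycle x y w
      - gammaCocycle x y z = ((a * b * (-c) : ℤ) : ℝ) := by
    simp only [gammaCocycle]
    push_cast
    linear_combination (y 1 - z 1) * (y 2 - x 2) * ha + (a : ℝ) * (y 2 - x 2) * hb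
      - (a : ℝ) * (b : ℝ) * hc
  unfold cCocycle
  rw [← Complex.exp_neg, ← Complex.exp_neg, ← Complex.exp_add, ← Complex.exp_add,
    ← Complex.exp_add, ← Complex.exp_int_mul_two_pi_mul_I (a * b * (-c))]
  congr 1
  have keyC : (gammaCocycle y z w : ℂ) - gammaCocycle x z w + gammaCocycle x y w
      - gammaCocycle x y z = ((a * b * (-c) : ℤ) : ℂ) := by exact_mod_cast key
  push_cast at keyC ⊢
  linear_combination (2 * (Real.pi : ℂ) * Complex.I) * keyC
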